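/- Let m_1, …, m_{2L} be a Majorana representation by n×n complex matrices. For k = 1, …, L define the number operators n_k := (1/2)(1 + i m_{2k−1} m_{2k}), and for ω ∈ {0,1}^L define n^{(ω)} := Σ_{k=1}^L [(1 − ω_k) n_k + ω_k (1 − n_k)]. Let U be an n×n unitary and Q ∈ ℝ^{2L×2L} a real orthogonal matrix such that U† m_j U = Σ_{k=1}^{2L} Q_{j,k} m_k for all j. Define M_ω := ⊕_{k=1}^L (1 − 2ω_k) · [[0, −1], [1, 0]] ∈ ℝ^{2L×2L} and M_t := Q M_ω Qᵀ. Then for every n×n density matrix ρ_p, tr(U (1 − n^{(ω)}) U† · ρ_p) = 1 + (1/4) tr[(M(ρ_p) − M_t)ᵀ M_t]. -/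

import Mathlib

/-!
**Statement 12** (Fidelity witness in terms of covariance matrices, Eq. (9) of the paper).

Let `m : Fin L × Fin 2 → Matrix (Fin n) (Fin n) ℂ` be a Majorana representation, where
the pair `(k, 0)` stands for the Majorana index `2k−1` and `(k, 1)` for `2k`.  With the
number operators `n_k := (1/2)(1 + i m_{2k−1} m_{2k})`, the flipped number operator
`n^{(ω)} := ∑_k [(1−ω_k) n_k + ω_k (1 − n_k)]`, a unitary `U` acting on modes via a real
orthogonal `Q` (`U† m_j U = ∑_k Q_{jk} m_k`), `M_ω := ⊕_k (1−2ω_k)·[[0,−1],[1,0]]` and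
`M_t := Q M_ω Qᵀ`, for every density matrix `ρ_p`:
`tr(U (1 − n^{(ω)}) U† ρ_p) = 1 + (1/4) tr[(M(ρ_p) − M_t)ᵀ M_t]`.
-/

open Matrix
open scoped ComplexOrder

/-- The (real) covariance matrix of a state `ρ` with respect to a family of
Majorana operators `m`: `M(ρ)_{jk} = (i/2) tr([m_j, m_k] ρ)`. -/
noncomputable def covarianceMatrix {ι : Type*} [Fintype ι] {n : ℕ}
    (m : ι → Matrix (Fin n) (Fin n) ℂ) (ρ : Matrix (Fin n) (Fin n) ℂ) :
    Matrix ι ι ℝ :=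
  fun j k => (Complex.I / 2 * ((m j * m k - m k * m j) * ρ).trace).re

/-! Conjugating by `U` replaces `ρ` by `Uᴴ ρ U`, whose covariance matrix `M'` satisfies
`M(ρ) = Q M' Qᵀ`; as `Q` is orthogonal, the right-hand side becomes `1 + ¼ tr((M' - M_ω)ᵀ M_ω)`.
For anticommuting self-adjoint `a, b` and Hermitian `ρ`, `tr(a b ρ)` is purely imaginary, hence
equal to `-i M_{ab}`; so `tr(n_k ρ) = (1 + M_{2k-1,2k}) / 2`. Both sides are then affine in the
pair entries `M_{2k-1,2k}` and agree because `(1 - 2ω_k)² = 1`. -/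

variable {ι : Type*} {n : ℕ}

lemma trace_transpose_mul_conj {R κ : Type*} [CommSemiring R] [Fintype ι] [Fintype κ]
    [DecidableEq ι] {Q : Matrix κ ι R} (hQ : Qᵀ * Q = 1) (A B : Matrix ι ι R) :
    ((Q * A * Qᵀ)ᵀ * (Q * B * Qᵀ)).trace = (Aᵀ * B).trace := by
  have hconj : (Q * A * Qᵀ)ᵀ * (Q * B * Qᵀ) = Q * (Aᵀ * B) * Qᵀ := by
    simp only [transpose_mul, transpose_transpose, Matrix.mul_assoc]
    rw [← Matrix.mul_assoc Qᵀ Q, hQ, Matrix.one_mul]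
  rw [hconj, trace_mul_comm, ← Matrix.mul_assoc, hQ, Matrix.one_mul]

noncomputable def numberOp (m : ι × Fin 2 → Matrix (Fin n) (Fin n) ℂ) (k : ι) :
    Matrix (Fin n) (Fin n) ℂ :=
  (2 : ℂ)⁻¹ • (1 + Complex.I • (m (k, 0) * m (k, 1)))

variable [Fintype ι]

noncomputable def flippedNumberOp (m : ι × Fin 2 → Matrix (Fin n) (Fin n) ℂ)
    (ω : ι → Fin 2) : Matrix (Fin n) (Fin n) ℂ :=
  ∑ k, ((1 - ((ω k : ℕ) : ℂ)) • numberOp m k + ((ω k : ℕ) : ℂ) • (1 - numberOp m k))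

section Covariance

variable (m : ι → Matrix (Fin n) (Fin n) ℂ)

lemma covarianceMatrix_transpose (ρ : Matrix (Fin n) (Fin n) ℂ) :
    (covarianceMatrix m ρ)ᵀ = -covarianceMatrix m ρ := by
  ext j k
  simp only [transpose_apply, Matrix.neg_apply, covarianceMatrix, ← neg_sub (m j * m k), neg_mul,
    trace_neg, mul_neg, Complex.neg_re]

lemma covarianceMatrix_conj {U : Matrix (Fin n) (Fin n) ℂ} (hU : U * Uᴴ = 1)
    (ρ : Matrix (Fin n) (Fin n) ℂ) :
    covarianceMatrix m (U * ρ * Uᴴ) = covarianceMatrix (fun p => Uᴴ * m p * U) ρ := by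
  have hconj : ∀ A B : Matrix (Fin n) (Fin n) ℂ,
      Uᴴ * A * U * (Uᴴ * B * U) = Uᴴ * (A * B) * U := fun A B => by
    simp only [Matrix.mul_assoc, ← Matrix.mul_assoc U Uᴴ, hU, Matrix.one_mul]
  ext j k
  simp only [covarianceMatrix, hconj, ← Matrix.sub_mul, ← Matrix.mul_sub]
  rw [← Matrix.mul_assoc, trace_mul_cycle, ← Matrix.mul_assoc]

lemma covarianceMatrix_sum_smul (Q : Matrix ι ι ℝ) (ρ : Matrix (Fin n) (Fin n) ℂ) :
    covarianceMatrix (fun p => ∑ q, (Q p q : ℂ) • m q) ρ = Q * covarianceMatrix m ρ * Qᵀ := by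
  have hre : ∀ (x y : ℝ) (z : ℂ),
      (Complex.I / 2 * (x * y * z)).re = x * y * (Complex.I / 2 * z).re := fun x y z => by
    rw [mul_left_comm, ← Complex.ofReal_mul, Complex.re_ofReal_mul]
  ext j k
  simp only [covarianceMatrix, mul_apply, transpose_apply, trace_sub, mul_sub, Complex.sub_re,
    Finset.sum_mul, Finset.mul_sum, smul_mul_smul_comm, Matrix.smul_mul, trace_sum, trace_smul,
    smul_eq_mul, Complex.re_sum, hre, sub_mul, Finset.sum_sub_distrib]
  congr 1
  · exact Finset.sum_congr rfl fun _ _ => Finset.sum_congr rfl fun _ _ => by ring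
  · rw [Finset.sum_comm]
    exact Finset.sum_congr rfl fun _ _ => Finset.sum_congr rfl fun _ _ => by ring

variable {m}

lemma trace_mul_mul_eq_neg_I_mul_covarianceMatrix {p q : ι}
    (hp : (m p)ᴴ = m p) (hq : (m q)ᴴ = m q) (hpq : m p * m q + m q * m p = 0)
    {ρ : Matrix (Fin n) (Fin n) ℂ} (hρ : ρᴴ = ρ) :
    (m p * m q * ρ).trace = -Complex.I * covarianceMatrix m ρ p q := by
  have hswap : (m q * m p * ρ).trace = -(m p * m q * ρ).trace := by
    rw [eq_neg_iff_add_eq_zero, ← trace_add, ← Matrix.add_mul, add_comm, hpq, Matrix.zero_mul,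
      trace_zero]
  have hstar : star (m p * m q * ρ).trace = -(m p * m q * ρ).trace := by
    rw [← trace_conjTranspose, conjTranspose_mul, conjTranspose_mul, hp, hq, hρ, trace_mul_comm,
      hswap]
  have hre : (m p * m q * ρ).trace.re = 0 := by
    have := congrArg Complex.re hstar
    rw [Complex.star_def, Complex.conj_re, Complex.neg_re] at this
    linarith
  apply Complex.ext <;> simp [covarianceMatrix, Matrix.sub_mul, hswap, hre]
  ring

end Covariance

section FockState

variable {m : ι × Fin 2 → Matrix (Fin n) (Fin n) ℂ} {ρ : Matrix (Fin n) (Fin n) ℂ}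

lemma trace_numberOp_mul (hsa : ∀ p, (m p)ᴴ = m p)
    (hanti : ∀ k, m (k, 0) * m (k, 1) + m (k, 1) * m (k, 0) = 0) (hρ : ρᴴ = ρ) (k : ι) :
    (numberOp m k * ρ).trace = 2⁻¹ * (ρ.trace + covarianceMatrix m ρ (k, 0) (k, 1)) := by
  rw [numberOp, Matrix.smul_mul, Matrix.add_mul, Matrix.one_mul, Matrix.smul_mul, trace_smul,
    trace_add, trace_smul,
    trace_mul_mul_eq_neg_I_mul_covarianceMatrix (hsa _) (hsa _) (hanti k) hρ, smul_eq_mul,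
    smul_eq_mul, ← mul_assoc, mul_neg, Complex.I_mul_I, neg_neg, one_mul]

lemma trace_flippedNumberOp_mul (hsa : ∀ p, (m p)ᴴ = m p)
    (hanti : ∀ k, m (k, 0) * m (k, 1) + m (k, 1) * m (k, 0) = 0) (hρ : ρᴴ = ρ) (ω : ι → Fin 2) :
    (flippedNumberOp m ω * ρ).trace
      = ∑ k, 2⁻¹ * (ρ.trace + (1 - 2 * ((ω k : ℕ) : ℂ)) * covarianceMatrix m ρ (k, 0) (k, 1)) := by
  rw [flippedNumberOp, Finset.sum_mul, trace_sum]
  refine Finset.sum_congr rfl fun k _ => ?_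
  rw [Matrix.add_mul, Matrix.smul_mul, Matrix.smul_mul, Matrix.sub_mul, Matrix.one_mul, trace_add,
    trace_smul, trace_smul, trace_sub, trace_numberOp_mul hsa hanti hρ, smul_eq_mul, smul_eq_mul]
  ring

end FockState

variable [DecidableEq ι]

def pairingMatrix (s : ι → ℝ) : Matrix (ι × Fin 2) (ι × Fin 2) ℝ :=
  ∑ k, (single (k, 0) (k, 1) (-s k) + single (k, 1) (k, 0) (s k))

lemma trace_transpose_mul_pairingMatrix (A : Matrix (ι × Fin 2) (ι × Fin 2) ℝ) (s : ι → ℝ) :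
    (Aᵀ * pairingMatrix s).trace = ∑ k, s k * (A (k, 1) (k, 0) - A (k, 0) (k, 1)) := by
  rw [pairingMatrix, Finset.mul_sum, trace_sum]
  refine Finset.sum_congr rfl fun k _ => ?_
  simp only [Matrix.mul_add, trace_add, trace_mul_single, transpose_apply, op_smul_eq_mul]
  ring

lemma pairingMatrix_apply_zero_one (s : ι → ℝ) (k : ι) :
    pairingMatrix s (k, 0) (k, 1) = -s k := by
  simp [pairingMatrix, Matrix.sum_apply, single, Prod.ext_iff]

lemma pairingMatrix_apply_one_zero (s : ι → ℝ) (k : ι) :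
    pairingMatrix s (k, 1) (k, 0) = s k := by
  simp [pairingMatrix, Matrix.sum_apply, single, Prod.ext_iff]

lemma trace_one_sub_flippedNumberOp_mul {m : ι × Fin 2 → Matrix (Fin n) (Fin n) ℂ}
    (hsa : ∀ p, (m p)ᴴ = m p) (hanti : ∀ k, m (k, 0) * m (k, 1) + m (k, 1) * m (k, 0) = 0)
    (ω : ι → Fin 2) {ρ : Matrix (Fin n) (Fin n) ℂ} (hρ : ρᴴ = ρ) (htr : ρ.trace = 1) :
    ((1 - flippedNumberOp m ω) * ρ).trace
      = 1 + (((4 : ℝ)⁻¹ * ((covarianceMatrix m ρ - pairingMatrix fun k => 1 - 2 * ((ω k : ℕ) : ℝ))ᵀ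
          * pairingMatrix fun k => 1 - 2 * ((ω k : ℕ) : ℝ)).trace : ℝ) : ℂ) := by
  have hskew (k : ι) : covarianceMatrix m ρ (k, 1) (k, 0) = -covarianceMatrix m ρ (k, 0) (k, 1) :=
    congrFun (congrFun (covarianceMatrix_transpose m ρ) (k, 0)) (k, 1)
  have hsign (k : ι) : (1 - 2 * ((ω k : ℕ) : ℂ)) ^ 2 = 1 := by
    generalize ω k = w
    fin_cases w <;> norm_num
  rw [Matrix.sub_mul, Matrix.one_mul, trace_sub, htr, trace_flippedNumberOp_mul hsa hanti hρ,
    transpose_sub, Matrix.sub_mul, trace_sub, trace_transpose_mul_pairingMatrix,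
    trace_transpose_mul_pairingMatrix, ← Finset.sum_sub_distrib, Finset.mul_sum,
    Complex.ofReal_sum, sub_eq_add_neg, ← Finset.sum_neg_distrib]
  refine congrArg _ (Finset.sum_congr rfl fun k _ => ?_)
  rw [hskew, pairingMatrix_apply_zero_one, pairingMatrix_apply_one_zero, htr]
  push_cast
  linear_combination (2⁻¹ : ℂ) * hsign k

theorem witness_eq_covariance_overlap {L n : ℕ}
    (m : Fin L × Fin 2 → Matrix (Fin n) (Fin n) ℂ)
    (hsa : ∀ p, (m p)ᴴ = m p)
    (hcar : ∀ p q, m p * m q + m q * m p = if p = q then (2 : ℂ) • 1 else 0)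
    (ω : Fin L → Fin 2)
    (U : Matrix (Fin n) (Fin n) ℂ) (hU : U ∈ Matrix.unitaryGroup (Fin n) ℂ)
    (Q : Matrix (Fin L × Fin 2) (Fin L × Fin 2) ℝ) (hQ : Qᵀ * Q = 1)
    (hmode : ∀ p, Uᴴ * m p * U = ∑ q, (Q p q : ℂ) • m q)
    (nop : Fin L → Matrix (Fin n) (Fin n) ℂ)
    (hnop : ∀ k, nop k = (2 : ℂ)⁻¹ • (1 + Complex.I • (m (k, 0) * m (k, 1))))
    (nω : Matrix (Fin n) (Fin n) ℂ)
    (hnω : nω = ∑ k, ((1 - ((ω k : ℕ) : ℂ)) • nop k + ((ω k : ℕ) : ℂ) • (1 - nop k)))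
    (Mω Mt : Matrix (Fin L × Fin 2) (Fin L × Fin 2) ℝ)
    (hMω : Mω = ∑ k, (Matrix.single (k, 0) (k, 1) (-(1 - 2 * ((ω k : ℕ) : ℝ)))
      + Matrix.single (k, 1) (k, 0) (1 - 2 * ((ω k : ℕ) : ℝ))))
    (hMt : Mt = Q * Mω * Qᵀ) :
    ∀ ρp : Matrix (Fin n) (Fin n) ℂ, ρp.PosSemidef → ρp.trace = 1 →
      (U * (1 - nω) * Uᴴ * ρp).trace
        = 1 + (((4 : ℝ)⁻¹ * ((covarianceMatrix m ρp - Mt)ᵀ * Mt).trace : ℝ) : ℂ) := by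
  intro ρp hpsd htr
  obtain rfl : nop = numberOp m := funext hnop
  replace hnω : nω = flippedNumberOp m ω := hnω
  replace hMω : Mω = pairingMatrix fun k => 1 - 2 * ((ω k : ℕ) : ℝ) := hMω
  have hUU : U * Uᴴ = 1 := Matrix.mem_unitaryGroup_iff.mp hU
  set ρ := Uᴴ * ρp * U
  have hρp : U * ρ * Uᴴ = ρp := by
    simp only [ρ, ← Matrix.mul_assoc, hUU, Matrix.one_mul]
    rw [Matrix.mul_assoc, hUU, Matrix.mul_one]
  have hρ : ρᴴ = ρ := by
    simp only [ρ, conjTranspose_mul, conjTranspose_conjTranspose, hpsd.1.eq, Matrix.mul_assoc]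
  have hρtr : ρ.trace = 1 := by rw [trace_mul_cycle, hUU, Matrix.one_mul, htr]
  have hLHS : (U * (1 - nω) * Uᴴ * ρp).trace = ((1 - nω) * ρ).trace := by
    rw [Matrix.mul_assoc (U * _), trace_mul_comm, ← Matrix.mul_assoc, trace_mul_comm]
  have hM : covarianceMatrix m ρp = Q * covarianceMatrix m ρ * Qᵀ := by
    rw [← hρp, covarianceMatrix_conj m hUU, show (fun p => Uᴴ * m p * U) = _ from funext hmode,
      covarianceMatrix_sum_smul]
  rw [hLHS, hM, hMt, ← Matrix.sub_mul, ← Matrix.mul_sub, trace_transpose_mul_conj hQ, hnω, hMω]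
  exact trace_one_sub_flippedNumberOp_mul hsa
    (fun k => by simpa using hcar (k, 0) (k, 1)) ω hρ hρtr
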